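/- arXiv:1706.07627 — 9 statements merged into one kernel-verified Lean document; each statement's English description precedes it below -/
import Mathlib

section
/- Let n_{d1}, n_{d2}, n_{d3} be positive reals, n_F ≥ 0, μ ∈ [0,1], and let Δ'_LB = max{1/n_{d3}, 1/max{n_{d1},n_{d2}}, 2/max{n_{d1}+n_{d3}, n_{d2}}}. Suppose Δ_E, Δ_F are real numbers with Δ_F ≥ 0 satisfying (i) Δ_E + Δ_F·n_F/max{n_{d2},n_{d3}} ≥ (2−μ)/max{n_{d2},n_{d3}}, (ii) Δ_E + Δ_F·n_F/n_{d2} ≥ (1−μ)/n_{d2}, and (iii) Δ_E ≥ Δ'_LB. If n_F ≤ n_{d2}, then Δ_E + Δ_F ≥ max{1/n_{d3}, 1/max{n_{d1},n_{d2}}, 2/max{n_{d1}+n_{d3},n_{d2}}, (1−μ)/n_{d2}, (2−μ)/max{n_{d2},n_{d3}}}. -/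
/-- Corollary 1: lower bound on the DTB in the low-fronthaul capacity regime
`n_F ≤ n_{d2}`. -/
theorem dtb_lower_bound_low_fronthaul
    (nd1 nd2 nd3 nF μ ΔE ΔF ΔLB' : ℝ)
    (hnd1 : 0 < nd1) (hnd2 : 0 < nd2) (hnd3 : 0 < nd3)
    (hnF : 0 ≤ nF) (hμ0 : 0 ≤ μ) (hμ1 : μ ≤ 1)
    (hΔLB' : ΔLB' = max (1 / nd3) (max (1 / max nd1 nd2) (2 / max (nd1 + nd3) nd2)))
    (hΔF : 0 ≤ ΔF)
    (hc1 : ΔE + ΔF * nF / max nd2 nd3 ≥ (2 - μ) / max nd2 nd3)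
    (hc2 : ΔE + ΔF * nF / nd2 ≥ (1 - μ) / nd2)
    (hc3 : ΔE ≥ ΔLB')
    (hreg : nF ≤ nd2) :
    ΔE + ΔF ≥ max (1 / nd3) (max (1 / max nd1 nd2) (max (2 / max (nd1 + nd3) nd2)
      (max ((1 - μ) / nd2) ((2 - μ) / max nd2 nd3)))) := by
  subst hΔLB'
  have hmax : (0:ℝ) < max nd2 nd3 := lt_of_lt_of_le hnd2 (le_max_left _ _)
  have key : ∀ c : ℝ, 0 < c → nF ≤ c → ΔF * nF / c ≤ ΔF := by
    intro c hc hle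
    rw [div_le_iff₀ hc]
    nlinarith
  have h1 : ΔE + ΔF ≥ (1 - μ) / nd2 := by
    have := key nd2 hnd2 hreg
    linarith
  have h2 : ΔE + ΔF ≥ (2 - μ) / max nd2 nd3 := by
    have := key (max nd2 nd3) hmax (le_trans hreg (le_max_left _ _))
    linarith
  simp only [ge_iff_le, max_le_iff] at hc3 ⊢
  refine ⟨by linarith [hc3.1], by linarith [hc3.2.1], by linarith [hc3.2.2], h1, h2⟩
end

section
/- Let n_{d1}, n_{d2}, n_{d3} be positive reals, n_F > 0, μ ∈ [0,1], and let Δ'_LB = max{1/n_{d3}, 1/max{n_{d1},n_{d2}}, 2/max{n_{d1}+n_{d3}, n_{d2}}}. Suppose Δ_E, Δ_F are real numbers with Δ_F ≥ 0 satisfying (i) Δ_E + Δ_F·n_F/max{n_{d2},n_{d3}} ≥ (2−μ)/max{n_{d2},n_{d3}}, (ii) Δ_E + Δ_F·n_F/n_{d2} ≥ (1−μ)/n_{d2}, and (iii) Δ_E ≥ Δ'_LB. If n_F ≥ max{n_{d2},n_{d3}}, then Δ_E + Δ_F ≥ max{ (2−μ)/n_F + (1 − max{n_{d2},n_{d3}}/n_F)·Δ'_LB,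 (1−μ)/n_F + (1 − n_{d2}/n_F)·Δ'_LB, Δ'_LB }. -/
/-- Corollary 2: lower bound on the DTB in the high-fronthaul capacity regime
`n_F ≥ max{n_{d2}, n_{d3}}`. -/
theorem dtb_lower_bound_high_fronthaul
    (nd1 nd2 nd3 nF μ ΔE ΔF ΔLB' : ℝ)
    (hnd1 : 0 < nd1) (hnd2 : 0 < nd2) (hnd3 : 0 < nd3)
    (hnF : 0 < nF) (hμ0 : 0 ≤ μ) (hμ1 : μ ≤ 1)
    (hΔLB' : ΔLB' = max (1 / nd3) (max (1 / max nd1 nd2) (2 / max (nd1 + nd3) nd2)))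
    (hΔF : 0 ≤ ΔF)
    (hc1 : ΔE + ΔF * nF / max nd2 nd3 ≥ (2 - μ) / max nd2 nd3)
    (hc2 : ΔE + ΔF * nF / nd2 ≥ (1 - μ) / nd2)
    (hc3 : ΔE ≥ ΔLB')
    (hreg : nF ≥ max nd2 nd3) :
    ΔE + ΔF ≥ max ((2 - μ) / nF + (1 - max nd2 nd3 / nF) * ΔLB')
      (max ((1 - μ) / nF + (1 - nd2 / nF) * ΔLB') ΔLB') := by
  have hm : 0 < max nd2 nd3 := lt_of_lt_of_le hnd2 (le_max_left _ _)
  have hreg2 : nd2 ≤ nF := le_trans (le_max_left _ _) hreg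
  -- derive cleared forms of the constraints
  have h1 : 2 - μ ≤ ΔE * max nd2 nd3 + ΔF * nF := by
    have h := hc1
    rw [ge_iff_le, div_le_iff₀ hm] at h
    have h2 : (ΔE + ΔF * nF / max nd2 nd3) * max nd2 nd3
        = ΔE * max nd2 nd3 + ΔF * nF := by field_simp
    linarith
  have h2 : 1 - μ ≤ ΔE * nd2 + ΔF * nF := by
    have h := hc2
    rw [ge_iff_le, div_le_iff₀ hnd2] at h
    have h2' : (ΔE + ΔF * nF / nd2) * nd2 = ΔE * nd2 + ΔF * nF := by field_simp
    linarith
  have hb1 : (2 - μ) / nF + (1 - max nd2 nd3 / nF) * ΔLB' ≤ ΔE + ΔF := by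
    rw [show (2 - μ) / nF + (1 - max nd2 nd3 / nF) * ΔLB'
        = ((2 - μ) + (nF - max nd2 nd3) * ΔLB') / nF by field_simp,
      div_le_iff₀ hnF]
    nlinarith [mul_le_mul_of_nonneg_right hc3 (sub_nonneg.mpr hreg)]
  have hb2 : (1 - μ) / nF + (1 - nd2 / nF) * ΔLB' ≤ ΔE + ΔF := by
    rw [show (1 - μ) / nF + (1 - nd2 / nF) * ΔLB'
        = ((1 - μ) + (nF - nd2) * ΔLB') / nF by field_simp,
      div_le_iff₀ hnF]
    nlinarith [mul_le_mul_of_nonneg_right hc3 (sub_nonneg.mpr hreg2)]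
  have hb3 : ΔLB' ≤ ΔE + ΔF := by linarith
  rw [ge_iff_le]
  exact max_le hb1 (max_le hb2 hb3)
end

section
/- Let n_{d1}, n_{d2}, n_{d3} be positive reals with n_{d3} ≥ 2n_{d2}, let n_F satisfy n_{d2} ≤ n_F ≤ n_{d3}, let μ'' = (n_{d3}−2n_{d2})/(n_{d3}−n_{d2}), let μ ∈ [0, μ''], let Δ'_LB = max{1/n_{d3}, 1/max{n_{d1},n_{d2}}, 2/max{n_{d1}+n_{d3}, n_{d2}}} and Δ''_LB = max{1/(n_{d3}−n_{d2}), Δ'_LB}. Suppose Δ_E, Δ_F are real numbers with Δ_F ≥ 0 satisfying (i) Δ_E + Δ_F·n_F/n_{d3} ≥ (2−μ)/n_{d3}, (ii) Δ_E + Δ_F·n_F/n_{d2} ≥ (1−μ)/n_{d2}, and (iii) Δ_E ≥ Δ'_LB. Then Δ_E + Δ_F ≥ (1−μ)/n_F + (1 − n_{d2}/n_F)·Δ''_LB. -/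
/-- Corollary 4 (small-cache case): lower bound on the DTB in the medium-fronthaul
capacity regime for channel regimes outside `I₁` (`n_{d3} ≥ 2 n_{d2}`), for cache
sizes `μ ≤ μ''`. -/
theorem dtb_lower_bound_medium_fronthaul_I1C_small_cache
    (nd1 nd2 nd3 nF μ μ'' ΔE ΔF ΔLB' ΔLB'' : ℝ)
    (hnd1 : 0 < nd1) (hnd2 : 0 < nd2) (hnd3 : 0 < nd3)
    (hreg : nd3 ≥ 2 * nd2)
    (hnF1 : nd2 ≤ nF) (hnF2 : nF ≤ nd3)
    (hμ'' : μ'' = (nd3 - 2 * nd2) / (nd3 - nd2))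
    (hμ0 : 0 ≤ μ) (hμ1 : μ ≤ μ'')
    (hΔLB' : ΔLB' = max (1 / nd3) (max (1 / max nd1 nd2) (2 / max (nd1 + nd3) nd2)))
    (hΔLB'' : ΔLB'' = max (1 / (nd3 - nd2)) ΔLB')
    (hΔF : 0 ≤ ΔF)
    (hc1 : ΔE + ΔF * nF / nd3 ≥ (2 - μ) / nd3)
    (hc2 : ΔE + ΔF * nF / nd2 ≥ (1 - μ) / nd2)
    (hc3 : ΔE ≥ ΔLB') :
    ΔE + ΔF ≥ (1 - μ) / nF + (1 - nd2 / nF) * ΔLB'' := by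
  have hnF : 0 < nF := lt_of_lt_of_le hnd2 hnF1
  have hdd : 0 < nd3 - nd2 := by linarith
  have h1' : 2 - μ ≤ ΔE * nd3 + ΔF * nF := by
    rw [ge_iff_le, div_le_iff₀ hnd3] at hc1
    have h : ΔF * nF / nd3 * nd3 = ΔF * nF := div_mul_cancel₀ _ (ne_of_gt hnd3)
    nlinarith [hc1]
  have h2' : 1 - μ ≤ ΔE * nd2 + ΔF * nF := by
    rw [ge_iff_le, div_le_iff₀ hnd2] at hc2
    have h : ΔF * nF / nd2 * nd2 = ΔF * nF := div_mul_cancel₀ _ (ne_of_gt hnd2)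
    nlinarith [hc2]
  have key : (1 - μ) + (nF - nd2) * ΔLB'' ≤ (ΔE + ΔF) * nF := by
    rcases le_total (1 / (nd3 - nd2)) ΔLB' with h | h
    · rw [hΔLB'', max_eq_right h]
      nlinarith [mul_le_mul_of_nonneg_left (show ΔLB' ≤ ΔE from hc3)
        (show (0:ℝ) ≤ nF - nd2 by linarith)]
    · rw [hΔLB'', max_eq_left h]
      have key2 : (1 - μ) * (nd3 - nd2) + (nF - nd2) ≤ (ΔE + ΔF) * nF * (nd3 - nd2) := by
        nlinarith [mul_le_mul_of_nonneg_left h1' (show (0:ℝ) ≤ nF - nd2 by linarith),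
          mul_le_mul_of_nonneg_left h2' (show (0:ℝ) ≤ nd3 - nF by linarith)]
      have heq : (1 - μ) + (nF - nd2) * (1 / (nd3 - nd2))
          = ((1 - μ) * (nd3 - nd2) + (nF - nd2)) / (nd3 - nd2) := by
        field_simp
      rw [heq, div_le_iff₀ hdd]
      nlinarith [key2]
  have heq : (1 - μ) / nF + (1 - nd2 / nF) * ΔLB''
      = ((1 - μ) + (nF - nd2) * ΔLB'') / nF := by
    field_simp
  rw [ge_iff_le, heq, div_le_iff₀ hnF]
  exact key
end

section
/- Let n_{d1}, n_{d2}, n_{d3} be positive reals with n_{d3} ≥ n_{d1}+n_{d2} and n_{d1} ≥ n_{d2}, and let μ ∈ [0,1]. Then max{1/n_{d3}, 1/max{n_{d1},n_{d2}}, 2/max{n_{d1}+n_{d3},n_{d2}}, (1−μ)/n_{d2}, (2−μ)/max{n_{d2},n_{d3}}} = max{(1−μ)/n_{d2}, 1/n_{d1}}. -/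
/-- Proposition 5 (Class III channel regime `n_{d3} ≥ n_{d1}+n_{d2} ≥ n_{d1} ≥ n_{d2}`):
the lower bound `Δ_LB(μ,n)` of Proposition 1 simplifies to
`max{(1-μ)/n_{d2}, 1/n_{d1}}`. -/
theorem class_III_lower_bound_simplification
    (nd1 nd2 nd3 μ : ℝ)
    (hnd1 : 0 < nd1) (hnd2 : 0 < nd2) (hnd3 : 0 < nd3)
    (hreg1 : nd3 ≥ nd1 + nd2) (hreg2 : nd1 ≥ nd2)
    (hμ0 : 0 ≤ μ) (hμ1 : μ ≤ 1) :
    max (1 / nd3) (max (1 / max nd1 nd2) (max (2 / max (nd1 + nd3) nd2)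
      (max ((1 - μ) / nd2) ((2 - μ) / max nd2 nd3)))) =
      max ((1 - μ) / nd2) (1 / nd1) := by
  have h31 : nd1 ≤ nd3 := by linarith
  have h1 : max nd1 nd2 = nd1 := max_eq_left hreg2
  have h2 : max (nd1 + nd3) nd2 = nd1 + nd3 := max_eq_left (by linarith)
  have h3 : max nd2 nd3 = nd3 := max_eq_right (by linarith)
  rw [h1, h2, h3]
  apply le_antisymm
  · apply max_le
    · exact le_max_of_le_right (one_div_le_one_div_of_le hnd1 h31)
    apply max_le
    · exact le_max_right _ _
    apply max_le
    · apply le_max_of_le_right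
      rw [div_le_div_iff₀ (by linarith) hnd1]
      linarith
    apply max_le
    · exact le_max_left _ _
    · -- (2-μ)/nd3 ≤ max ((1-μ)/nd2) (1/nd1)
      rcases le_total ((1 - μ) / nd2) (1 / nd1) with h | h
      · apply le_max_of_le_right
        rw [div_le_div_iff₀ hnd3 hnd1]
        rw [div_le_div_iff₀ hnd2 hnd1] at h
        nlinarith
      · apply le_max_of_le_left
        rw [div_le_div_iff₀ hnd3 hnd2]
        rw [div_le_div_iff₀ hnd1 hnd2] at h
        nlinarith
  · apply max_le
    · exact le_max_of_le_right (le_max_of_le_right (le_max_of_le_right (le_max_left _ _)))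
    · exact le_max_of_le_right (le_max_left _ _)
end

section
/- Let n_{d1}, n_{d2}, n_{d3} be positive reals, μ ∈ [0,1], and let Δ_LB(μ) = max{1/n_{d3}, 1/max{n_{d1},n_{d2}}, 2/max{n_{d1}+n_{d3},n_{d2}}, (1−μ)/n_{d2}, (2−μ)/max{n_{d2},n_{d3}}}. Then: (a) if n_{d1}+n_{d3} ≥ n_{d2} ≥ n_{d1} ≥ n_{d3} and n_{d2} ≥ 2n_{d3}, then Δ_LB(μ) = 1/n_{d3}; (b) if n_{d1} ≥ n_{d2} ≥ 2n_{d3}, then Δ_LB(μ) = 1/n_{d3}; (c) if n_{d3} ≥ n_{d2} ≥ n_{d1} and n_{d3} ≥ 2n_{d2}, then Δ_LB(μ) = 1/n_{d2}; (d) if n_{d2} ≥ n_{d1}+n_{d3}, then Δ_LB(μ) = max{1/n_{d3}, 2/n_{d2}}. In particular, in each of these regimes Δ_LB(μ) does not depend on μ. -/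
private lemma myDivLeDiv {a b c d : ℝ} (hb : 0 < b) (hd : 0 < d)
    (h : a * d ≤ c * b) : a / b ≤ c / d := (div_le_div_iff₀ hb hd).mpr h

/-- Proposition 7 (Class IV channel regimes, constant DTB): the lower bound
`Δ_LB(μ,n)` of Proposition 1 equals the stated μ-independent value in each
listed regime. -/
theorem class_IV_lower_bound_constant
    (nd1 nd2 nd3 μ ΔLB : ℝ)
    (hnd1 : 0 < nd1) (hnd2 : 0 < nd2) (hnd3 : 0 < nd3)
    (hμ0 : 0 ≤ μ) (hμ1 : μ ≤ 1)
    (hΔLB : ΔLB = max (1 / nd3) (max (1 / max nd1 nd2) (max (2 / max (nd1 + nd3) nd2)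
      (max ((1 - μ) / nd2) ((2 - μ) / max nd2 nd3))))) :
    ((nd1 + nd3 ≥ nd2 ∧ nd2 ≥ nd1 ∧ nd1 ≥ nd3 ∧ nd2 ≥ 2 * nd3) → ΔLB = 1 / nd3) ∧
      ((nd1 ≥ nd2 ∧ nd2 ≥ 2 * nd3) → ΔLB = 1 / nd3) ∧
      ((nd3 ≥ nd2 ∧ nd2 ≥ nd1 ∧ nd3 ≥ 2 * nd2) → ΔLB = 1 / nd2) ∧
      ((nd2 ≥ nd1 + nd3) → ΔLB = max (1 / nd3) (2 / nd2)) := by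
  subst hΔLB
  have h12 : 0 < max nd1 nd2 := lt_max_of_lt_left hnd1
  have h13 : 0 < max (nd1 + nd3) nd2 := lt_max_of_lt_right hnd2
  have h23 : 0 < max nd2 nd3 := lt_max_of_lt_left hnd2
  have m1 := le_max_left nd1 nd2
  have m2 := le_max_right nd1 nd2
  have m3 := le_max_left (nd1 + nd3) nd2
  have m4 := le_max_right (nd1 + nd3) nd2
  have m5 := le_max_left nd2 nd3
  have m6 := le_max_right nd2 nd3
  refine ⟨?_, ?_, ?_, ?_⟩
  · rintro ⟨h1, h2, h3, h4⟩
    refine max_eq_left (max_le (myDivLeDiv h12 hnd3 (by nlinarith))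
      (max_le (myDivLeDiv h13 hnd3 (by nlinarith))
      (max_le (myDivLeDiv hnd2 hnd3 (by nlinarith))
              (myDivLeDiv h23 hnd3 ?_))))
    rcases max_cases nd2 nd3 with ⟨he, _⟩ | ⟨he, _⟩ <;> rw [he] <;> nlinarith
  · rintro ⟨h1, h2⟩
    refine max_eq_left (max_le (myDivLeDiv h12 hnd3 (by nlinarith))
      (max_le (myDivLeDiv h13 hnd3 (by nlinarith))
      (max_le (myDivLeDiv hnd2 hnd3 (by nlinarith))
              (myDivLeDiv h23 hnd3 ?_))))
    rcases max_cases nd2 nd3 with ⟨he, _⟩ | ⟨he, _⟩ <;> rw [he] <;> nlinarith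
  · rintro ⟨h1, h2, h3⟩
    have hm : max nd1 nd2 = nd2 := max_eq_right h2
    apply le_antisymm
    · refine max_le (myDivLeDiv hnd3 hnd2 (by nlinarith))
        (max_le (myDivLeDiv h12 hnd2 (by nlinarith))
        (max_le (myDivLeDiv h13 hnd2 (by nlinarith))
        (max_le (myDivLeDiv hnd2 hnd2 (by nlinarith))
                (myDivLeDiv h23 hnd2 (by nlinarith)))))
    · rw [hm]
      exact le_max_of_le_right (le_max_left _ _)
  · rintro h1
    have e1 : max nd1 nd2 = nd2 := max_eq_right (by linarith)
    have e2 : max (nd1 + nd3) nd2 = nd2 := max_eq_right h1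
    have e3 : max nd2 nd3 = nd2 := max_eq_left (by linarith)
    rw [e1, e2, e3]
    congr 1
    apply le_antisymm
    · exact max_le (myDivLeDiv hnd2 hnd2 (by nlinarith))
        (max_le le_rfl (max_le (myDivLeDiv hnd2 hnd2 (by nlinarith))
          (myDivLeDiv hnd2 hnd2 (by nlinarith))))
    · exact le_max_of_le_right (le_max_left _ _)
end

section
/- Let n_{d1}, n_{d2}, n_{d3} be positive reals with n_{d2} < n_{d3} ≤ 2n_{d2}, let μ ∈ [0,1], let n_F satisfy n_{d2} ≤ n_F ≤ n_{d3}, and let Δ'_LB = max{1/n_{d3}, 1/max{n_{d1},n_{d2}}, 2/max{n_{d1}+n_{d3}, n_{d2}}} and Δ''_LB = max{1/(n_{d3}−n_{d2}), Δ'_LB}. Then max{ (1−μ)/n_F + (1 − n_{d2}/n_F)·Δ''_LB, (2−μ)/n_{d3}, Δ'_LB } = max{ (2−μ)/n_{d3}, Δ'_LB }. -/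
/-- Medium-fronthaul-regime reduction of Theorem 1 to the Class I expression in
channel regime `I₁` (`n_{d2} < n_{d3} ≤ 2 n_{d2}`): for `n_F ∈ [n_{d2}, n_{d3}]`,
the term `(1-μ)/n_F + (1 - n_{d2}/n_F)·Δ''_LB` is dominated by
`max{(2-μ)/n_{d3}, Δ'_LB}`. -/
theorem medium_fronthaul_class_I_reduction
    (nd1 nd2 nd3 μ nF ΔLB' ΔLB'' : ℝ)
    (hnd1 : 0 < nd1) (hnd2 : 0 < nd2) (hnd3 : 0 < nd3)
    (h1 : nd2 < nd3) (h2 : nd3 ≤ 2 * nd2)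
    (hμ0 : 0 ≤ μ) (hμ1 : μ ≤ 1)
    (hnF1 : nd2 ≤ nF) (hnF2 : nF ≤ nd3)
    (hΔLB' : ΔLB' = max (1 / nd3) (max (1 / max nd1 nd2) (2 / max (nd1 + nd3) nd2)))
    (hΔLB'' : ΔLB'' = max (1 / (nd3 - nd2)) ΔLB') :
    max ((1 - μ) / nF + (1 - nd2 / nF) * ΔLB'') (max ((2 - μ) / nd3) ΔLB') =
      max ((2 - μ) / nd3) ΔLB' := by
  have hd : 0 < nd3 - nd2 := by linarith
  have hnF : 0 < nF := lt_of_lt_of_le hnd2 hnF1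
  -- ΔLB' ≤ 1/(nd3-nd2)
  have hΔle : ΔLB' ≤ 1 / (nd3 - nd2) := by
    rw [hΔLB']
    have h3 : (1:ℝ) / nd3 ≤ 1 / (nd3 - nd2) := by
      apply one_div_le_one_div_of_le hd; linarith
    have h4 : (1:ℝ) / max nd1 nd2 ≤ 1 / (nd3 - nd2) := by
      apply one_div_le_one_div_of_le hd
      calc nd3 - nd2 ≤ nd2 := by linarith
        _ ≤ max nd1 nd2 := le_max_right _ _
    have h5 : (2:ℝ) / max (nd1 + nd3) nd2 ≤ 1 / (nd3 - nd2) := by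
      rw [div_le_div_iff₀ (lt_max_of_lt_left (by linarith)) hd]
      have : nd1 + nd3 ≤ max (nd1 + nd3) nd2 := le_max_left _ _
      nlinarith
    exact max_le h3 (max_le h4 h5)
  have hΔ'' : ΔLB'' = 1 / (nd3 - nd2) := by
    rw [hΔLB'']; exact max_eq_left hΔle
  -- main inequality
  have key : (1 - μ) / nF + (1 - nd2 / nF) * ΔLB'' ≤ (2 - μ) / nd3 := by
    rw [hΔ'']
    have h6 : 0 ≤ (2 - μ) * nd2 - (1 - μ) * nd3 := by nlinarith
    have h7 : 0 ≤ (nd3 - nF) * ((2 - μ) * nd2 - (1 - μ) * nd3) :=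
      mul_nonneg (by linarith) h6
    have heq : (1 - μ) / nF + (1 - nd2 / nF) * (1 / (nd3 - nd2)) =
        ((1 - μ) * (nd3 - nd2) + (nF - nd2)) / (nF * (nd3 - nd2)) := by
      field_simp
    rw [heq, div_le_div_iff₀ (by positivity) hnd3]
    nlinarith [h7]
  have : (1 - μ) / nF + (1 - nd2 / nF) * ΔLB'' ≤ max ((2 - μ) / nd3) ΔLB' :=
    le_trans key (le_max_left _ _)
  exact max_eq_right this
end

section
/- Let n_{d1}, n_{d2}, n_{d3} be positive reals with n_{d3} ≤ 2n_{d2}, let μ ∈ [0,1], let n_F ≥ max{n_{d2},n_{d3}}, and let Δ'_LB = max{1/n_{d3}, 1/max{n_{d1},n_{d2}}, 2/max{n_{d1}+n_{d3}, n_{d2}}}. Then max{ (2−μ)/n_F + (1 − max{n_{d2},n_{d3}}/n_F)·Δ'_LB, (1−μ)/n_F + (1 − n_{d2}/n_F)·Δ'_LB, Δ'_LB } = max{ (2−μ)/n_F + (1 − max{n_{d2},n_{d3}}/n_F)·Δ'_LB, Δ'_LB }. -/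
/-- High-fronthaul-regime reduction of Theorem 1 to the Class I expression:
when `n_{d3} ≤ 2 n_{d2}` and `n_F ≥ max{n_{d2},n_{d3}}`, the term
`(1-μ)/n_F + (1 - n_{d2}/n_F)·Δ'_LB` is dominated by
`(2-μ)/n_F + (1 - max{n_{d2},n_{d3}}/n_F)·Δ'_LB`. -/
theorem high_fronthaul_class_I_reduction
    (nd1 nd2 nd3 μ nF ΔLB' : ℝ)
    (hnd1 : 0 < nd1) (hnd2 : 0 < nd2) (hnd3 : 0 < nd3)
    (hreg : nd3 ≤ 2 * nd2)
    (hμ0 : 0 ≤ μ) (hμ1 : μ ≤ 1)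
    (hnF : nF ≥ max nd2 nd3)
    (hΔLB' : ΔLB' = max (1 / nd3) (max (1 / max nd1 nd2) (2 / max (nd1 + nd3) nd2))) :
    max ((2 - μ) / nF + (1 - max nd2 nd3 / nF) * ΔLB')
        (max ((1 - μ) / nF + (1 - nd2 / nF) * ΔLB') ΔLB') =
      max ((2 - μ) / nF + (1 - max nd2 nd3 / nF) * ΔLB') ΔLB' := by
  have hnFpos : 0 < nF := lt_of_lt_of_le hnd2 ((le_max_left _ _).trans hnF)
  have hM : nd3 - nd2 ≤ max nd2 nd3 - nd2 → True := fun _ => trivial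
  -- key: (max nd2 nd3 - nd2) * ΔLB' ≤ 1
  have hkey : (max nd2 nd3 - nd2) * ΔLB' ≤ 1 := by
    rcases le_total nd3 nd2 with h | h
    · rw [max_eq_left h, sub_self, zero_mul]; norm_num
    · rw [max_eq_right h, hΔLB']
      have h1 : (nd3 - nd2) * (1 / nd3) ≤ 1 := by
        rw [mul_one_div, div_le_one hnd3]; linarith
      have h2 : (nd3 - nd2) * (1 / max nd1 nd2) ≤ 1 := by
        rw [mul_one_div, div_le_one (lt_max_of_lt_right hnd2)]
        have := le_max_right nd1 nd2; linarith
      have h3 : (nd3 - nd2) * (2 / max (nd1 + nd3) nd2) ≤ 1 := by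
        rw [mul_div_assoc', div_le_one (lt_max_of_lt_right hnd2)]
        have := le_max_left (nd1 + nd3) nd2; linarith
      rcases le_total 0 (nd3 - nd2) with hpos | hneg
      · rcases max_cases (1 / max nd1 nd2) (2 / max (nd1 + nd3) nd2) with ⟨he, _⟩ | ⟨he, _⟩ <;>
          rcases max_cases (1/nd3) (max (1 / max nd1 nd2) (2 / max (nd1 + nd3) nd2)) with
            ⟨hf, _⟩ | ⟨hf, _⟩ <;> rw [hf] <;> try rw [he]
        all_goals assumption
      · have : nd3 - nd2 = 0 := le_antisymm (by linarith) (by linarith)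
        rw [this, zero_mul]; norm_num
  have hba : (1 - μ) / nF + (1 - nd2 / nF) * ΔLB' ≤
      (2 - μ) / nF + (1 - max nd2 nd3 / nF) * ΔLB' := by
    have : (max nd2 nd3 - nd2) / nF * ΔLB' ≤ 1 / nF := by
      rw [div_mul_eq_mul_div, div_le_div_iff₀ hnFpos hnFpos]
      nlinarith [mul_le_mul_of_nonneg_right hkey hnFpos.le]
    have expand : (2 - μ) / nF + (1 - max nd2 nd3 / nF) * ΔLB'
        - ((1 - μ) / nF + (1 - nd2 / nF) * ΔLB')
        = 1 / nF - (max nd2 nd3 - nd2) / nF * ΔLB' := by ring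
    linarith
  rw [← max_assoc, max_eq_left hba]
end

section
/- Let n_{d1}, n_{d2}, n_{d3} be positive reals and let Δ'_LB = max{1/n_{d3}, 1/max{n_{d1},n_{d2}}, 2/max{n_{d1}+n_{d3}, n_{d2}}}. If either n_{d3} ≤ n_{d2} ≤ 2n_{d3} or n_{d2} ≤ n_{d3} ≤ 2n_{d2}, then the threshold cache size μ' = 2 − max{n_{d2},n_{d3}}·Δ'_LB satisfies 0 ≤ μ' ≤ 1. -/
/-- In the broadcast-feasible channel regimes `I₀` (`n_{d3} ≤ n_{d2} ≤ 2 n_{d3}`)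
and `I₁` (`n_{d2} ≤ n_{d3} ≤ 2 n_{d2}`), the threshold fractional cache size
`μ' = 2 − max{n_{d2},n_{d3}}·Δ'_LB` lies in `[0,1]`. -/
theorem threshold_cache_size_valid
    (nd1 nd2 nd3 ΔLB' μ' : ℝ)
    (hnd1 : 0 < nd1) (hnd2 : 0 < nd2) (hnd3 : 0 < nd3)
    (hΔLB' : ΔLB' = max (1 / nd3) (max (1 / max nd1 nd2) (2 / max (nd1 + nd3) nd2)))
    (hμ' : μ' = 2 - max nd2 nd3 * ΔLB')
    (hreg : (nd3 ≤ nd2 ∧ nd2 ≤ 2 * nd3) ∨ (nd2 ≤ nd3 ∧ nd3 ≤ 2 * nd2)) :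
    0 ≤ μ' ∧ μ' ≤ 1 := by
  have h23 : nd2 ≤ 2 * nd3 := by rcases hreg with ⟨h1, h2⟩ | ⟨h1, h2⟩ <;> linarith
  have h32 : nd3 ≤ 2 * nd2 := by rcases hreg with ⟨h1, h2⟩ | ⟨h1, h2⟩ <;> linarith
  set M : ℝ := max nd2 nd3 with hM
  have hMpos : 0 < M := lt_of_lt_of_le hnd2 (le_max_left _ _)
  have hM3 : nd3 ≤ M := le_max_right _ _
  have hΔ1 : 1 / nd3 ≤ ΔLB' := by rw [hΔLB']; exact le_max_left _ _
  have hlow : 1 ≤ M * ΔLB' := by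
    have : nd3 * (1 / nd3) ≤ M * ΔLB' := by
      apply mul_le_mul hM3 hΔ1 (by positivity) hMpos.le
    rwa [mul_one_div, div_self hnd3.ne'] at this
  have hM2nd3 : M ≤ 2 * nd3 := max_le h23 (by linarith)
  have hM2nd2 : M ≤ 2 * nd2 := max_le (by linarith) h32
  have hmax12 : 0 < max nd1 nd2 := lt_of_lt_of_le hnd2 (le_max_right _ _)
  have hmax13 : 0 < max (nd1 + nd3) nd2 := lt_of_lt_of_le hnd2 (le_max_right _ _)
  have hΔup : ΔLB' ≤ 2 / M := by
    rw [hΔLB']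
    apply max_le
    · rw [div_le_div_iff₀ hnd3 hMpos]; linarith
    apply max_le
    · rw [div_le_div_iff₀ hmax12 hMpos]
      have : nd2 ≤ max nd1 nd2 := le_max_right _ _
      nlinarith
    · apply div_le_div_of_nonneg_left (by norm_num) hMpos
      exact max_le (le_max_right _ _)
        (le_trans (by linarith : nd3 ≤ nd1 + nd3) (le_max_left _ _))
  have hhigh : M * ΔLB' ≤ 2 := by
    calc M * ΔLB' ≤ M * (2 / M) := by
          exact mul_le_mul_of_nonneg_left hΔup hMpos.le
      _ = 2 := by field_simp
  constructor <;> rw [hμ'] <;> linarith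
end

section
/- Let n_{d1}, n_{d2}, n_{d3} be positive reals with n_{d1}+n_{d3} ≥ n_{d2} ≥ n_{d3} ≥ n_{d1}, let q = max{n_{d1},n_{d2},n_{d3}} = n_{d2}, and set L̄ = (n_{d1}+n_{d3})/2, μ' = 2 − 2n_{d2}/(n_{d1}+n_{d3}), and the rate allocation R_{1,p} = n_{d2}−n_{d3}, R_c^u = (n_{d3}−n_{d1})/2, R_{2,p} = 0, R_{IN}^v = R_{IN}^n = n_{d1}+n_{d3}−n_{d2}, R_c^v = (2n_{d2}−n_{d1}−n_{d3})/2, l_1 = l_3 = l_4 = 0, l_2 = 2n_{d2}−n_{d1}−n_{d3}. Then all these quantities are nonnegative, μ' ∈ [0,1], and they satisfy: (i) l_1 + R_{1,p} + R_{IN}^v + R_c^v + R_c^u ≤ q; (ii) l_2 + l_3 + l_4 + R_{2,p} + R_{IN}^n ≤ q; (iii) R_{2,p} + R_{IN}^n ≤ μ'·L̄; (iv) R_c^u + R_c^v + R_{IN}^v ≤ n_{d3}; (v) l_3 + l_4 + R_{2,p} + R_{IN}^n ≤ n_{d1}; (vi) R_{1,p} + R_{IN}^v + R_c^v + R_c^u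 ≤ n_{d2}; (vii) l_4 + R_{2,p} ≤ max{n_{d1}−n_{d2}, 0}; (viii) R_c^u + R_c^v + R_{IN}^v + n_{d1} − n_{d2} = l_3 + l_4 + R_{IN}^n + R_{2,p}; (ix) R_{IN}^v = R_{IN}^n. Moreover min{ R_{2,p} + R_c^u + R_{IN}^n + R_{1,p}, R_c^v + R_{IN}^v } = (n_{d1}+n_{d3})/2 = 1 / Δ'_LB, where Δ'_LB = max{1/n_{d3}, 1/max{n_{d1},n_{d2}}, 2/max{n_{d1}+n_{d3}, n_{d2}}}. -/
/-- Feasibility and optimality of the rate allocation of Table I (second column)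
achieving corner point `B₂` of Theorem 1 in the strong-cross-link Class I regime
`n_{d1}+n_{d3} ≥ n_{d2} ≥ n_{d3} ≥ n_{d1}`. -/
theorem rate_allocation_B2_SCL_feasible_and_optimal
    (nd1 nd2 nd3 q L μ' R1p Rcu R2p RINv Rcv RINn l1 l2 l3 l4 ΔLB' : ℝ)
    (hnd1 : 0 < nd1) (hnd2 : 0 < nd2) (hnd3 : 0 < nd3)
    (hreg1 : nd1 + nd3 ≥ nd2) (hreg2 : nd2 ≥ nd3) (hreg3 : nd3 ≥ nd1)
    (hq : q = max nd1 (max nd2 nd3))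
    (hL : L = (nd1 + nd3) / 2)
    (hμ' : μ' = 2 - 2 * nd2 / (nd1 + nd3))
    (hR1p : R1p = nd2 - nd3)
    (hRcu : Rcu = (nd3 - nd1) / 2)
    (hR2p : R2p = 0)
    (hRINv : RINv = nd1 + nd3 - nd2)
    (hRINn : RINn = nd1 + nd3 - nd2)
    (hRcv : Rcv = (2 * nd2 - nd1 - nd3) / 2)
    (hl1 : l1 = 0) (hl2 : l2 = 2 * nd2 - nd1 - nd3) (hl3 : l3 = 0) (hl4 : l4 = 0)
    (hΔLB' : ΔLB' = max (1 / nd3) (max (1 / max nd1 nd2) (2 / max (nd1 + nd3) nd2))) :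
    (0 ≤ R1p ∧ 0 ≤ Rcu ∧ 0 ≤ R2p ∧ 0 ≤ RINv ∧ 0 ≤ Rcv ∧ 0 ≤ RINn ∧
        0 ≤ l1 ∧ 0 ≤ l2 ∧ 0 ≤ l3 ∧ 0 ≤ l4) ∧
      (0 ≤ μ' ∧ μ' ≤ 1) ∧
      q = nd2 ∧
      l1 + R1p + RINv + Rcv + Rcu ≤ q ∧
      l2 + l3 + l4 + R2p + RINn ≤ q ∧
      R2p + RINn ≤ μ' * L ∧
      Rcu + Rcv + RINv ≤ nd3 ∧
      l3 + l4 + R2p + RINn ≤ nd1 ∧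
      R1p + RINv + Rcv + Rcu ≤ nd2 ∧
      l4 + R2p ≤ max (nd1 - nd2) 0 ∧
      Rcu + Rcv + RINv + nd1 - nd2 = l3 + l4 + RINn + R2p ∧
      RINv = RINn ∧
      min (R2p + Rcu + RINn + R1p) (Rcv + RINv) = (nd1 + nd3) / 2 ∧
      (nd1 + nd3) / 2 = 1 / ΔLB' := by
  subst hq hL hμ' hR1p hRcu hR2p hRINv hRINn hRcv hl1 hl2 hl3 hl4 hΔLB'
  have h13 : 0 < nd1 + nd3 := by linarith
  have h2nd2 : nd1 + nd3 ≤ 2 * nd2 := by linarith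
  have hmax1 : max nd1 nd2 = nd2 := max_eq_right (le_trans hreg3 hreg2)
  have hmax2 : max (nd1 + nd3) nd2 = nd1 + nd3 := max_eq_left hreg1
  have hq' : max nd1 (max nd2 nd3) = nd2 := by
    rw [max_eq_left hreg2, max_eq_right (le_trans hreg3 hreg2)]
  have hΔ : max (1 / nd3) (max (1 / max nd1 nd2) (2 / max (nd1 + nd3) nd2))
      = 2 / (nd1 + nd3) := by
    rw [hmax1, hmax2, max_eq_right, max_eq_right]
    · rw [div_le_div_iff₀ hnd2 h13]; linarith
    · exact le_max_of_le_right (by rw [div_le_div_iff₀ hnd3 h13]; linarith)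
  have hμL : (2 - 2 * nd2 / (nd1 + nd3)) * ((nd1 + nd3) / 2) = nd1 + nd3 - nd2 := by
    field_simp
  have hμ0 : 0 ≤ 2 - 2 * nd2 / (nd1 + nd3) := by
    rw [sub_nonneg, div_le_iff₀ h13]; linarith
  have hμ1 : 2 - 2 * nd2 / (nd1 + nd3) ≤ 1 := by
    have : (1 : ℝ) ≤ 2 * nd2 / (nd1 + nd3) := (le_div_iff₀ h13).mpr (by linarith)
    linarith
  have hmin : min (0 + (nd3 - nd1) / 2 + (nd1 + nd3 - nd2) + (nd2 - nd3))
      ((2 * nd2 - nd1 - nd3) / 2 + (nd1 + nd3 - nd2)) = (nd1 + nd3) / 2 := by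
    rw [show (0 + (nd3 - nd1) / 2 + (nd1 + nd3 - nd2) + (nd2 - nd3)) = (nd1 + nd3) / 2 by ring,
      show ((2 * nd2 - nd1 - nd3) / 2 + (nd1 + nd3 - nd2)) = (nd1 + nd3) / 2 by ring, min_self]
  refine ⟨⟨by linarith, by linarith, le_refl 0, by linarith, by linarith, by linarith,
    le_refl 0, by linarith, le_refl 0, le_refl 0⟩, ⟨hμ0, hμ1⟩, hq', ?_, ?_, ?_, ?_, ?_, ?_, ?_,
    by ring, rfl, hmin, ?_⟩
  · rw [hq']; linarith
  · rw [hq']; linarith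
  · rw [hμL]; linarith
  · linarith
  · linarith
  · linarith
  · simp [max_eq_right (by linarith : nd1 - nd2 ≤ (0:ℝ))]
  · rw [hΔ, one_div_div]
end
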